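/- Suppose {u_n} ⊂ H^s(ℝ^N) satisfies sup_n ([u_n]_s² + ‖u_n‖_{L²}²) < ∞ and sup_{z ∈ ℝ^N} ∫_{B₁(z)} |u_n|² dx → 0 as n → ∞, where B₁(z) = {y ∈ ℝ^N : |y − z| ≤ 1}. Then ‖u_n‖_{L^r(ℝ^N)} → 0 as n → ∞ for every r ∈ (2, 2_s^*). -/

import Mathlib

open MeasureTheory Real Filter Topology Set Metric
open scoped InnerProductSpace ENNReal

noncomputable section

/-- `ℝ^N` as a Euclidean space. -/
abbrev RN (N : ℕ) := EuclideanSpace ℝ (Fin N)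

/-- The bilinear Gagliardo form `E(u,v)`. -/
noncomputable def Eform (N : ℕ) (s : ℝ) (u v : RN N → ℝ) : ℝ :=
  ∫ x : RN N, ∫ y : RN N, (u x - u y) * (v x - v y) / ‖x - y‖ ^ ((N : ℝ) + 2 * s)

/-- The Gagliardo seminorm squared, valued in `ℝ≥0∞` (for finiteness statements). -/
noncomputable def gagl (N : ℕ) (s : ℝ) (u : RN N → ℝ) : ℝ≥0∞ :=
  ∫⁻ x : RN N, ∫⁻ y : RN N,
    ENNReal.ofReal ((u x - u y) ^ 2 / ‖x - y‖ ^ ((N : ℝ) + 2 * s))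

/-- Membership in the fractional Sobolev space `H^s(ℝ^N)`. -/
def memHs (N : ℕ) (s : ℝ) (u : RN N → ℝ) : Prop :=
  MemLp u 2 (volume : Measure (RN N)) ∧ gagl N s u < ⊤

/-- The critical fractional Sobolev exponent `2_s^* = 2N/(N-2s)`. -/
noncomputable def twoStar (N : ℕ) (s : ℝ) : ℝ := 2 * N / (N - 2 * s)

/-- The `L^p` norm (real exponent `p`). -/
noncomputable def LpN (N : ℕ) (p : ℝ) (u : RN N → ℝ) : ℝ :=
  (∫ x : RN N, |u x| ^ p) ^ (1 / p)

/-- The best Sobolev constant `S_s`. -/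
noncomputable def Ss (N : ℕ) (s : ℝ) : ℝ :=
  sInf { r | ∃ u : RN N → ℝ, memHs N s u ∧ u ≠ 0 ∧
    r = Eform N s u u / (LpN N (twoStar N s) u) ^ 2 }

/-- Condition (f1). -/
def condF1 (f : ℝ → ℝ) : Prop :=
  Continuous f ∧ ContDiffOn ℝ 1 f (Ioi (0 : ℝ)) ∧ (∀ t ≤ (0 : ℝ), f t = 0) ∧
    Tendsto (fun t => f t / t) (nhdsWithin 0 (Ioi (0 : ℝ))) (nhds 0)

/-- Condition (f2). -/
def condF2 (N : ℕ) (s : ℝ) (f : ℝ → ℝ) : Prop :=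
  Tendsto (fun t => f t / t ^ (twoStar N s - 1)) atTop (nhds 1)

/-- Condition (f3), with parameters `D` and `p`. -/
def condF3 (N : ℕ) (s : ℝ) (f : ℝ → ℝ) (D p : ℝ) : Prop :=
  0 < D ∧ p < twoStar N s ∧ ∀ t : ℝ, 0 ≤ t →
    t ^ (twoStar N s - 1) + D * t ^ (p - 1) ≤ f t

/-- The primitive `F(t) = ∫₀ᵗ f`. -/
noncomputable def Fprim (f : ℝ → ℝ) (t : ℝ) : ℝ := ∫ τ in (0 : ℝ)..t, f τ

/-- Condition (V1). -/
def condV1 {N : ℕ} (V : RN N → ℝ) : Prop :=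
  ContDiff ℝ 1 V ∧ ∃ V₀ > (0 : ℝ), ∀ x, V₀ ≤ V x

/-- Condition (V2), with `Vinf = lim_{|x|→∞} V(x)`. -/
def condV2 {N : ℕ} (V : RN N → ℝ) (Vinf : ℝ) : Prop :=
  Tendsto V (cocompact (RN N)) (nhds Vinf) ∧ (∀ x, V x ≤ Vinf) ∧ V ≠ fun _ => Vinf

/-- Condition (V3). -/
def condV3 (N : ℕ) (s : ℝ) (V : RN N → ℝ) : Prop :=
  LpN N ((N : ℝ) / (2 * s)) (fun x => max (⟪gradient V x, x⟫_ℝ) 0) < 2 * s * Ss N s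

/-- The energy functional `I_λ` (with `λ = 1` this is `I`). -/
noncomputable def Ilam (N : ℕ) (s : ℝ) (V : RN N → ℝ) (f : ℝ → ℝ) (lam : ℝ)
    (u : RN N → ℝ) : ℝ :=
  (1 / 2) * (Eform N s u u + ∫ x : RN N, V x * u x ^ 2)
    - lam * ∫ x : RN N, Fprim f (u x)

/-- `u` is a critical point of `I_λ`. -/
def critPt (N : ℕ) (s : ℝ) (V : RN N → ℝ) (f : ℝ → ℝ) (lam : ℝ) (u : RN N → ℝ) : Prop :=
  memHs N s u ∧ ∀ φ : RN N → ℝ, memHs N s φ →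
    Eform N s u φ + (∫ x : RN N, V x * u x * φ x) = lam * ∫ x : RN N, f (u x) * φ x

/-- The `H^s` norm associated with the potential `V`. -/
noncomputable def HsNorm (N : ℕ) (s : ℝ) (V : RN N → ℝ) (u : RN N → ℝ) : ℝ :=
  Real.sqrt (Eform N s u u + ∫ x : RN N, V x * u x ^ 2)

/-- `γ : [0,1] → H^s(ℝ^N)` is a continuous path (w.r.t. the `H^s` norm). -/
def HsPath (N : ℕ) (s : ℝ) (V : RN N → ℝ) (γ : ℝ → RN N → ℝ) : Prop :=
  (∀ t ∈ Icc (0 : ℝ) 1, memHs N s (γ t)) ∧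
  ∀ t ∈ Icc (0 : ℝ) 1, ∀ ε > (0 : ℝ), ∃ δ > (0 : ℝ), ∀ t' ∈ Icc (0 : ℝ) 1,
    |t' - t| < δ → HsNorm N s V (fun x => γ t' x - γ t x) < ε

/-- The mountain pass level `c_λ`. -/
noncomputable def mpLevel (N : ℕ) (s : ℝ) (V : RN N → ℝ) (f : ℝ → ℝ) (lam : ℝ) : ℝ :=
  sInf ((fun γ => sSup ((fun t => Ilam N s V f lam (γ t)) '' Icc (0 : ℝ) 1)) ''
    { γ : ℝ → RN N → ℝ | HsPath N s V γ ∧ γ 0 = 0 ∧ Ilam N s V f lam (γ 1) < 0 })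

/-- Weak convergence `u_n ⇀ u` in `H^s(ℝ^N)`. -/
def weakConv (N : ℕ) (s : ℝ) (V : RN N → ℝ) (un : ℕ → RN N → ℝ) (u : RN N → ℝ) : Prop :=
  ∀ φ : RN N → ℝ, memHs N s φ →
    Tendsto (fun n => Eform N s (un n) φ + ∫ x : RN N, V x * un n x * φ x) atTop
      (nhds (Eform N s u φ + ∫ x : RN N, V x * u x * φ x))

/-- The dual norm `‖I_λ'(u)‖`. -/
noncomputable def derivNorm (N : ℕ) (s : ℝ) (V : RN N → ℝ) (f : ℝ → ℝ) (lam : ℝ)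
    (u : RN N → ℝ) : ℝ :=
  sSup { r | ∃ φ : RN N → ℝ, memHs N s φ ∧ HsNorm N s V φ ≤ 1 ∧
    r = |Eform N s u φ + (∫ x : RN N, V x * u x * φ x) - lam * ∫ x : RN N, f (u x) * φ x| }

end



set_option maxHeartbeats 2000000

section lionsAux
variable {N : ℕ} {s : ℝ}

lemma gagl_congr_ae {u v : RN N → ℝ} (h : u =ᵐ[volume] v) : gagl N s u = gagl N s v := by
  unfold gagl
  refine lintegral_congr_ae ?_
  filter_upwards [h] with x hx
  refine lintegral_congr_ae ?_
  filter_upwards [h] with y hy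
  rw [hx, hy]

lemma Eform_self_congr_ae {u v : RN N → ℝ} (h : u =ᵐ[volume] v) :
    Eform N s u u = Eform N s v v := by
  unfold Eform
  refine integral_congr_ae ?_
  filter_upwards [h] with x hx
  refine integral_congr_ae ?_
  filter_upwards [h] with y hy
  rw [hx, hy]

lemma measurable_gagl_integrand {u : RN N → ℝ} (hu : Measurable u) :
    Measurable (fun p : RN N × RN N =>
      ((u p.1 - u p.2) ^ 2 / ‖p.1 - p.2‖ ^ ((N : ℝ) + 2 * s))) := by
  have h1 : Measurable fun p : RN N × RN N => (u p.1 - u p.2) ^ 2 :=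
    ((hu.comp measurable_fst).sub (hu.comp measurable_snd)).pow_const 2
  have h2 : Measurable fun p : RN N × RN N => ‖p.1 - p.2‖ ^ ((N : ℝ) + 2 * s) :=
    (measurable_fst.sub measurable_snd).norm.pow measurable_const
  exact h1.div h2

lemma Eform_self_eq_toReal_gagl {u : RN N → ℝ} (hu : Measurable u)
    (hfin : gagl N s u < ⊤) : Eform N s u u = (gagl N s u).toReal := by
  have hg := measurable_gagl_integrand (s := s) hu
  have hnn : ∀ x y : RN N, 0 ≤ (u x - u y) ^ 2 / ‖x - y‖ ^ ((N : ℝ) + 2 * s) := by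
    intro x y
    positivity
  -- inner equality for every x
  have hinner : ∀ x : RN N,
      (∫ y : RN N, (u x - u y) * (u x - u y) / ‖x - y‖ ^ ((N : ℝ) + 2 * s)) =
        (∫⁻ y : RN N, ENNReal.ofReal ((u x - u y) ^ 2 / ‖x - y‖ ^ ((N : ℝ) + 2 * s))).toReal := by
    intro x
    have : (∫ y : RN N, (u x - u y) * (u x - u y) / ‖x - y‖ ^ ((N : ℝ) + 2 * s)) =
        (∫ y : RN N, (u x - u y) ^ 2 / ‖x - y‖ ^ ((N : ℝ) + 2 * s)) := by
      congr 1; funext y; ring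
    rw [this]
    refine integral_eq_lintegral_of_nonneg_ae (Eventually.of_forall fun y => hnn x y) ?_
    exact (hg.comp measurable_prodMk_left).aestronglyMeasurable
  have hG : Measurable fun x : RN N =>
      ∫⁻ y : RN N, ENNReal.ofReal ((u x - u y) ^ 2 / ‖x - y‖ ^ ((N : ℝ) + 2 * s)) := by
    exact Measurable.lintegral_prod_right' (f := fun p : RN N × RN N =>
      ENNReal.ofReal ((u p.1 - u p.2) ^ 2 / ‖p.1 - p.2‖ ^ ((N : ℝ) + 2 * s)))
      (ENNReal.measurable_ofReal.comp hg)
  have hae : ∀ᵐ x ∂(volume : Measure (RN N)),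
      (∫⁻ y : RN N, ENNReal.ofReal ((u x - u y) ^ 2 / ‖x - y‖ ^ ((N : ℝ) + 2 * s))) < ⊤ :=
    ae_lt_top hG hfin.ne
  unfold Eform gagl
  calc (∫ x : RN N, ∫ y : RN N, (u x - u y) * (u x - u y) / ‖x - y‖ ^ ((N : ℝ) + 2 * s))
      = ∫ x : RN N, ((∫⁻ y : RN N,
          ENNReal.ofReal ((u x - u y) ^ 2 / ‖x - y‖ ^ ((N : ℝ) + 2 * s))).toReal) := by
        exact integral_congr_ae (Eventually.of_forall hinner)
    _ = (∫⁻ x : RN N, ∫⁻ y : RN N,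
          ENNReal.ofReal ((u x - u y) ^ 2 / ‖x - y‖ ^ ((N : ℝ) + 2 * s))).toReal := by
        rw [integral_eq_lintegral_of_nonneg_ae
          (Eventually.of_forall fun x => ENNReal.toReal_nonneg)
          (hG.ennreal_toReal.aestronglyMeasurable)]
        congr 1
        refine lintegral_congr_ae ?_
        filter_upwards [hae] with x hx
        rw [ENNReal.ofReal_toReal hx.ne]


lemma distrib_bound (hs : 0 < s) {u : RN N → ℝ} (hu : Measurable u)
    {lam ρ : ℝ} (hlam : 0 < lam) (hρ : 0 < ρ) {B : ℝ≥0∞}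
    (hball : ∀ x : RN N, volume {y ∈ closedBall x ρ | lam / 2 < |u y|} ≤ B)
    (hB : 2 * B ≤ volume (closedBall (0 : RN N) ρ)) :
    volume {x : RN N | lam < |u x|} *
      (ENNReal.ofReal (lam ^ 2 / (4 * ρ ^ ((N : ℝ) + 2 * s))) *
        (volume (closedBall (0 : RN N) ρ) / 2)) ≤ gagl N s u := by
  set ω := volume (closedBall (0 : RN N) ρ) with hω
  have hωt : ω ≠ ⊤ := (measure_closedBall_lt_top).ne
  have hTmeas : MeasurableSet {y : RN N | lam / 2 < |u y|} :=
    hu.abs measurableSet_Ioi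
  have hEmeas : MeasurableSet {x : RN N | lam < |u x|} := hu.abs measurableSet_Ioi
  set c0 : ℝ≥0∞ := ENNReal.ofReal (lam ^ 2 / (4 * ρ ^ ((N : ℝ) + 2 * s))) with hc0
  have key : ∀ x ∈ {x : RN N | lam < |u x|},
      c0 * (ω / 2) ≤ ∫⁻ y : RN N,
        ENNReal.ofReal ((u x - u y) ^ 2 / ‖x - y‖ ^ ((N : ℝ) + 2 * s)) := by
    intro x hx
    simp only [mem_setOf_eq] at hx
    set S := closedBall x ρ \ {y : RN N | lam / 2 < |u y|} with hS
    have hSmeas : MeasurableSet S := measurableSet_closedBall.diff hTmeas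
    have hSvol : ω / 2 ≤ volume S := by
      have hsub : closedBall x ρ ⊆ S ∪ {y ∈ closedBall x ρ | lam / 2 < |u y|} := by
        intro y hy
        by_cases h : lam / 2 < |u y|
        · exact Or.inr ⟨hy, h⟩
        · exact Or.inl ⟨hy, h⟩
      have h1 : ω ≤ volume S + B := by
        have := (measure_mono (μ := (volume : Measure (RN N))) hsub).trans (measure_union_le _ _)
        have hx0 : volume (closedBall x ρ) = ω := by
          rw [hω]
          exact Measure.addHaar_closedBall_center volume x ρ
        rw [hx0] at this
        exact this.trans (add_le_add le_rfl (hball x))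
      have hB2 : B ≤ ω / 2 := by
        rw [ENNReal.le_div_iff_mul_le (Or.inl two_ne_zero) (Or.inl ENNReal.ofNat_ne_top),
          mul_comm]
        exact hB
      have : ω ≤ volume S + ω / 2 := h1.trans (add_le_add le_rfl hB2)
      have h2 : ω - ω / 2 ≤ volume S := tsub_le_iff_right.mpr this
      rwa [ENNReal.sub_half hωt] at h2
    have hpt : ∀ y ∈ S, c0 ≤ ENNReal.ofReal ((u x - u y) ^ 2 / ‖x - y‖ ^ ((N : ℝ) + 2 * s)) := by
      intro y hy
      obtain ⟨hy1, hy2⟩ := hy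
      simp only [mem_setOf_eq, not_lt] at hy2
      have hxy : ‖x - y‖ ≤ ρ := by
        rw [← dist_eq_norm]
        exact (mem_closedBall'.mp hy1)
      have huy : |u y| ≤ lam / 2 := hy2
      have hdiff : lam / 2 ≤ |u x - u y| := by
        have := abs_sub_abs_le_abs_sub (u x) (u y)
        linarith
      have hne : x ≠ y := by
        intro h
        rw [h] at hx
        linarith [abs_nonneg (u y)]
      have hnorm : 0 < ‖x - y‖ := by
        rw [norm_pos_iff, sub_ne_zero]
        exact hne
      have hexp : (0 : ℝ) ≤ (N : ℝ) + 2 * s := by positivity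
      have hden1 : 0 < ‖x - y‖ ^ ((N : ℝ) + 2 * s) := rpow_pos_of_pos hnorm _
      have hden2 : ‖x - y‖ ^ ((N : ℝ) + 2 * s) ≤ ρ ^ ((N : ℝ) + 2 * s) :=
        rpow_le_rpow hnorm.le hxy hexp
      have hnum : lam ^ 2 / 4 ≤ (u x - u y) ^ 2 := by
        have h1 : (lam / 2) ^ 2 ≤ |u x - u y| ^ 2 :=
          pow_le_pow_left₀ (by positivity) hdiff 2
        rw [sq_abs] at h1
        nlinarith
      apply ENNReal.ofReal_le_ofReal
      have h4 : lam ^ 2 / (4 * ρ ^ ((N : ℝ) + 2 * s)) = (lam ^ 2 / 4) / ρ ^ ((N : ℝ) + 2 * s) := by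
        ring
      rw [h4]
      exact div_le_div₀ (sq_nonneg _) hnum hden1 hden2
    calc c0 * (ω / 2) ≤ c0 * volume S := by gcongr
      _ = ∫⁻ _ in S, c0 := by rw [setLIntegral_const, mul_comm]
      _ ≤ ∫⁻ y in S, ENNReal.ofReal ((u x - u y) ^ 2 / ‖x - y‖ ^ ((N : ℝ) + 2 * s)) :=
          setLIntegral_mono' hSmeas hpt
      _ ≤ ∫⁻ y, ENNReal.ofReal ((u x - u y) ^ 2 / ‖x - y‖ ^ ((N : ℝ) + 2 * s)) :=
          setLIntegral_le_lintegral _ _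
  calc volume {x : RN N | lam < |u x|} * (c0 * (ω / 2))
      = ∫⁻ _ in {x : RN N | lam < |u x|}, c0 * (ω / 2) := by
        rw [setLIntegral_const, mul_comm]
    _ ≤ ∫⁻ x in {x : RN N | lam < |u x|},
          ∫⁻ y, ENNReal.ofReal ((u x - u y) ^ 2 / ‖x - y‖ ^ ((N : ℝ) + 2 * s)) :=
        setLIntegral_mono' hEmeas key
    _ ≤ gagl N s u := setLIntegral_le_lintegral _ _


lemma master (hs : 0 < s) (hNs : 2 * s < (N : ℝ)) {p r M : ℝ}
    (hp : 0 < p) (hr2 : 2 < r) (hrp : r < 2 + 2 * s * p / (N : ℝ)) (hM : 0 < M) :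
    ∃ C : ℝ, 0 < C ∧ ∀ (u : RN N → ℝ) (δ : ℝ), Measurable u → 0 < δ →
      gagl N s u ≤ ENNReal.ofReal M →
      (∫⁻ x : RN N, ENNReal.ofReal (u x ^ 2)) ≤ ENNReal.ofReal M →
      (∀ (x : RN N) (ρ lam : ℝ), 0 < ρ → ρ ≤ 1 → 0 < lam →
        volume {y ∈ closedBall x ρ | lam / 2 < |u y|} ≤ ENNReal.ofReal ((2 / lam) ^ p * δ)) →
      (∫⁻ x : RN N, ENNReal.ofReal (|u x| ^ r)) ≤ ENNReal.ofReal (C * δ ^ ((r - 2) / p)) := by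
  have hN0 : (0 : ℝ) < N := lt_trans (by positivity) hNs
  have hr0 : (0 : ℝ) < r := by linarith
  set ω := (volume (closedBall (0 : RN N) 1)).toReal with hωdef
  have hωpos : 0 < ω :=
    ENNReal.toReal_pos (measure_closedBall_pos volume _ one_pos).ne' measure_closedBall_lt_top.ne
  have hωe : volume (closedBall (0 : RN N) 1) = ENNReal.ofReal ω :=
    (ENNReal.ofReal_toReal measure_closedBall_lt_top.ne).symm
  set σ : ℝ := 2 * s * p / (N : ℝ) with hσdef
  have hσpos : 0 < σ := by positivity
  have hrσ : r < 2 + σ := hrp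
  set a : ℝ := (2 : ℝ) ^ (p + 1) / ω with hadef
  have ha : 0 < a := by positivity
  set c₀ : ℝ := a ^ (1 / p) with hc₀def
  have hc₀ : 0 < c₀ := rpow_pos_of_pos ha _
  set K : ℝ := 8 * M / ω * a ^ (2 * s / (N : ℝ)) with hKdef
  have hK : 0 < K := by positivity
  set C : ℝ := M * r * c₀ ^ (r - 2) / (r - 2) + K * r * c₀ ^ (r - 2 - σ) / (σ + 2 - r)
    with hCdef
  have hC : 0 < C := by
    have h1 : 0 < r - 2 := by linarith
    have h2 : 0 < σ + 2 - r := by linarith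
    have := rpow_pos_of_pos hc₀ (r - 2)
    have := rpow_pos_of_pos hc₀ (r - 2 - σ)
    positivity
  refine ⟨C, hC, ?_⟩
  intro u δ hu hδ hΓ h2 hball
  set Λ : ℝ := c₀ * δ ^ (1 / p) with hΛdef
  have hΛ : 0 < Λ := by positivity
  -- Chebyshev bound for small t
  have cheb : ∀ t : ℝ, 0 < t →
      volume {x : RN N | t < |u x|} ≤ ENNReal.ofReal (M / t ^ 2) := by
    intro t ht
    have hsub : {x : RN N | t < |u x|} ⊆
        {x : RN N | ENNReal.ofReal (t ^ 2) ≤ ENNReal.ofReal (u x ^ 2)} := by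
      intro x hx
      simp only [mem_setOf_eq] at hx ⊢
      apply ENNReal.ofReal_le_ofReal
      have h1 : t ^ 2 ≤ |u x| ^ 2 := pow_le_pow_left₀ ht.le hx.le 2
      rwa [sq_abs] at h1
    have hcb := mul_meas_ge_le_lintegral₀
      (μ := (volume : Measure (RN N)))
      (f := fun x => ENNReal.ofReal (u x ^ 2))
      ((hu.pow_const 2).ennreal_ofReal.aemeasurable) (ENNReal.ofReal (t ^ 2))
    have ht2 : ENNReal.ofReal (t ^ 2) ≠ 0 := by
      simp [ENNReal.ofReal_eq_zero, not_le]
      positivity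
    calc volume {x : RN N | t < |u x|}
        ≤ volume {x : RN N | ENNReal.ofReal (t ^ 2) ≤ ENNReal.ofReal (u x ^ 2)} :=
          measure_mono hsub
      _ ≤ (∫⁻ x : RN N, ENNReal.ofReal (u x ^ 2)) / ENNReal.ofReal (t ^ 2) := by
          rw [ENNReal.le_div_iff_mul_le (Or.inl ht2) (Or.inl ENNReal.ofReal_ne_top)]
          rw [mul_comm]
          exact hcb
      _ ≤ ENNReal.ofReal M / ENNReal.ofReal (t ^ 2) := by gcongr
      _ = ENNReal.ofReal (M / t ^ 2) := (ENNReal.ofReal_div_of_pos (by positivity)).symm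
  -- tail bound for large t
  have tail : ∀ t : ℝ, Λ ≤ t →
      volume {x : RN N | t < |u x|} ≤
        ENNReal.ofReal (K * δ ^ (2 * s / (N : ℝ)) * t ^ (-(2 + σ))) := by
    intro t ht
    have ht0 : 0 < t := lt_of_lt_of_le hΛ ht
    have htp : 0 < t ^ p := rpow_pos_of_pos ht0 _
    set g : ℝ := a * δ / t ^ p with hgdef
    have hg : 0 < g := by positivity
    set ρ : ℝ := g ^ (1 / (N : ℝ)) with hρdef
    have hρ0 : 0 < ρ := rpow_pos_of_pos hg _
    have hρNr : ρ ^ ((N : ℝ)) = g := by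
      rw [hρdef, ← Real.rpow_mul hg.le]
      rw [one_div, inv_mul_cancel₀ hN0.ne']
      exact Real.rpow_one g
    have hρN : ρ ^ (N : ℕ) = g := by
      rw [← Real.rpow_natCast ρ N]; exact hρNr
    have hc₀p : c₀ ^ p = a := by
      rw [hc₀def, ← Real.rpow_mul ha.le, one_div, inv_mul_cancel₀ hp.ne', Real.rpow_one]
    have hδp : (δ ^ (1 / p)) ^ p = δ := by
      rw [← Real.rpow_mul hδ.le, one_div, inv_mul_cancel₀ hp.ne', Real.rpow_one]
    have hΛp : Λ ^ p = a * δ := by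
      rw [hΛdef, Real.mul_rpow hc₀.le (rpow_pos_of_pos hδ _).le, hc₀p, hδp]
    have hg1 : g ≤ 1 := by
      rw [hgdef, div_le_one htp]
      calc a * δ = Λ ^ p := hΛp.symm
        _ ≤ t ^ p := Real.rpow_le_rpow hΛ.le ht hp.le
    have hρ1 : ρ ≤ 1 := Real.rpow_le_one hg.le hg1 (by positivity)
    have hvolρ : volume (closedBall (0 : RN N) ρ) = ENNReal.ofReal (g * ω) := by
      rw [Measure.addHaar_closedBall' (volume : Measure (RN N)) _ hρ0.le,
        finrank_euclideanSpace_fin, hρN, hωe, ← ENNReal.ofReal_mul hg.le]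
    have hBeq : 2 * ENNReal.ofReal ((2 / t) ^ p * δ) = volume (closedBall (0 : RN N) ρ) := by
      rw [hvolρ, show (2 : ℝ≥0∞) = ENNReal.ofReal 2 by simp,
        ← ENNReal.ofReal_mul (by norm_num)]
      congr 1
      have h2p : (2 / t) ^ p = (2 : ℝ) ^ p / t ^ p := Real.div_rpow (by norm_num) ht0.le p
      have h2p1 : (2 : ℝ) ^ (p + 1) = 2 ^ p * 2 := by
        rw [Real.rpow_add (by norm_num : (0:ℝ) < 2), Real.rpow_one]
      rw [h2p, hgdef, hadef, h2p1]
      field_simp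
    have hb : ∀ x : RN N, volume {y ∈ closedBall x ρ | t / 2 < |u y|} ≤
        ENNReal.ofReal ((2 / t) ^ p * δ) := fun x => hball x ρ t hρ0 hρ1 ht0
    have hd := distrib_bound hs hu ht0 hρ0 hb (le_of_eq hBeq)
    have hfac : ENNReal.ofReal (t ^ 2 / (4 * ρ ^ ((N : ℝ) + 2 * s))) *
        (volume (closedBall (0 : RN N) ρ) / 2) =
        ENNReal.ofReal (t ^ 2 * ω / (8 * ρ ^ (2 * s))) := by
      rw [hvolρ, show (2 : ℝ≥0∞) = ENNReal.ofReal 2 by simp,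
        ← ENNReal.ofReal_div_of_pos (by norm_num),
        ← ENNReal.ofReal_mul (by positivity)]
      congr 1
      have hsplit : ρ ^ ((N : ℝ) + 2 * s) = ρ ^ ((N : ℝ)) * ρ ^ (2 * s) :=
        Real.rpow_add hρ0 _ _
      rw [hsplit, hρNr]
      have h1 : ρ ^ (2 * s) > 0 := rpow_pos_of_pos hρ0 _
      field_simp
      ring
    rw [hfac] at hd
    have hd2 : volume {x : RN N | t < |u x|} * ENNReal.ofReal (t ^ 2 * ω / (8 * ρ ^ (2 * s)))
        ≤ ENNReal.ofReal M := hd.trans hΓ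
    have hGpos : 0 < t ^ 2 * ω / (8 * ρ ^ (2 * s)) := by
      have := rpow_pos_of_pos hρ0 (2 * s)
      positivity
    have hvol : volume {x : RN N | t < |u x|} ≤
        ENNReal.ofReal (M / (t ^ 2 * ω / (8 * ρ ^ (2 * s)))) := by
      rw [ENNReal.ofReal_div_of_pos hGpos]
      rw [ENNReal.le_div_iff_mul_le
        (Or.inl (by simp [ENNReal.ofReal_eq_zero, not_le]; positivity))
        (Or.inl ENNReal.ofReal_ne_top)]
      exact hd2
    refine hvol.trans (ENNReal.ofReal_le_ofReal (le_of_eq ?_))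
    -- real computation
    have hρ2s : ρ ^ (2 * s) = a ^ (2 * s / (N : ℝ)) * δ ^ (2 * s / (N : ℝ)) * t ^ (-σ) := by
      have h1 : ρ ^ (2 * s) = g ^ (2 * s / (N : ℝ)) := by
        rw [hρdef, ← Real.rpow_mul hg.le]
        congr 1
        field_simp
      rw [h1, hgdef, Real.div_rpow (by positivity) htp.le,
        Real.mul_rpow ha.le hδ.le, ← Real.rpow_mul ht0.le]
      have : p * (2 * s / (N : ℝ)) = σ := by
        rw [hσdef]; field_simp
      rw [this, Real.rpow_neg ht0.le, div_eq_mul_inv]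
    have htexp : t ^ (-(2 + σ)) = t ^ (-σ) / t ^ 2 := by
      rw [← Real.rpow_natCast t 2, ← Real.rpow_sub ht0]
      congr 1
      push_cast
      ring
    rw [hρ2s, hKdef, htexp]
    have hts : t ^ (-σ) > 0 := rpow_pos_of_pos ht0 _
    field_simp
  -- layer cake
  have hlc : (∫⁻ x : RN N, ENNReal.ofReal (|u x| ^ r)) =
      ∫⁻ t in Ioi (0 : ℝ),
        volume {x : RN N | t < |u x|} * ENNReal.ofReal (r * t ^ (r - 1)) := by
    have key := lintegral_comp_eq_lintegral_meas_lt_mul (volume : Measure (RN N))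
      (f := fun x => |u x|) (g := fun t => r * t ^ (r - 1))
      (Eventually.of_forall fun x => abs_nonneg _)
      hu.abs.aemeasurable
      (fun t _ => (intervalIntegral.intervalIntegrable_rpow' (by linarith)).const_mul r)
      (((ae_restrict_iff' measurableSet_Ioi).2 (Eventually.of_forall fun t ht => by
        have : (0:ℝ) < t := ht
        positivity)))
    rw [← key]
    refine lintegral_congr fun x => ?_
    congr 1
    rw [intervalIntegral.integral_const_mul, integral_rpow (Or.inl (by linarith))]
    rw [Real.zero_rpow (by linarith : r - 1 + 1 ≠ 0)]
    have hr1 : r - 1 + 1 = r := by ring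
    rw [hr1]
    field_simp
    simp
  -- split the layer cake integral
  have hsplit : (∫⁻ t in Ioi (0 : ℝ),
        volume {x : RN N | t < |u x|} * ENNReal.ofReal (r * t ^ (r - 1))) =
      (∫⁻ t in Ioc (0 : ℝ) Λ,
        volume {x : RN N | t < |u x|} * ENNReal.ofReal (r * t ^ (r - 1))) +
      ∫⁻ t in Ioi Λ,
        volume {x : RN N | t < |u x|} * ENNReal.ofReal (r * t ^ (r - 1)) := by
    rw [← Ioc_union_Ioi_eq_Ioi hΛ.le,
      lintegral_union measurableSet_Ioi (Ioc_disjoint_Ioi le_rfl)]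
  have hI1 : (∫⁻ t in Ioc (0 : ℝ) Λ,
        volume {x : RN N | t < |u x|} * ENNReal.ofReal (r * t ^ (r - 1))) ≤
      ENNReal.ofReal (M * r * Λ ^ (r - 2) / (r - 2)) := by
    have hmono : ∀ t ∈ Ioc (0 : ℝ) Λ,
        volume {x : RN N | t < |u x|} * ENNReal.ofReal (r * t ^ (r - 1)) ≤
          ENNReal.ofReal (M * r * t ^ (r - 3)) := by
      intro t ht
      have ht0 : 0 < t := ht.1
      calc volume {x : RN N | t < |u x|} * ENNReal.ofReal (r * t ^ (r - 1))
          ≤ ENNReal.ofReal (M / t ^ 2) * ENNReal.ofReal (r * t ^ (r - 1)) := by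
            gcongr
            exact cheb t ht0
        _ = ENNReal.ofReal (M / t ^ 2 * (r * t ^ (r - 1))) :=
            (ENNReal.ofReal_mul (by positivity)).symm
        _ = ENNReal.ofReal (M * r * t ^ (r - 3)) := by
            congr 1
            have hpow : t ^ (r - 1) = t ^ (r - 3) * t ^ 2 := by
              rw [← Real.rpow_natCast t 2, ← Real.rpow_add ht0]
              congr 1
              push_cast
              ring
            rw [hpow]
            field_simp
    have hint : IntegrableOn (fun t : ℝ => M * r * t ^ (r - 3)) (Ioc 0 Λ) volume :=
      ((intervalIntegral.intervalIntegrable_rpow'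
        (by linarith : (-1 : ℝ) < r - 3)).const_mul (M * r)).1
    calc (∫⁻ t in Ioc (0 : ℝ) Λ,
          volume {x : RN N | t < |u x|} * ENNReal.ofReal (r * t ^ (r - 1)))
        ≤ ∫⁻ t in Ioc (0 : ℝ) Λ, ENNReal.ofReal (M * r * t ^ (r - 3)) :=
          setLIntegral_mono' measurableSet_Ioc hmono
      _ = ENNReal.ofReal (∫ t in Ioc (0 : ℝ) Λ, M * r * t ^ (r - 3)) :=
          (ofReal_integral_eq_lintegral_ofReal hint
            (((ae_restrict_iff' measurableSet_Ioc).2 (Eventually.of_forall fun t ht => by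
              have : (0 : ℝ) < t := ht.1
              positivity)))).symm
      _ ≤ ENNReal.ofReal (M * r * Λ ^ (r - 2) / (r - 2)) := by
          apply ENNReal.ofReal_le_ofReal
          rw [← intervalIntegral.integral_of_le hΛ.le, intervalIntegral.integral_const_mul,
            integral_rpow (Or.inl (by linarith : (-1 : ℝ) < r - 3))]
          rw [Real.zero_rpow (by linarith : r - 3 + 1 ≠ 0)]
          have h32 : r - 3 + 1 = r - 2 := by ring
          rw [h32, sub_zero]
          exact le_of_eq (by ring)
  have hI2 : (∫⁻ t in Ioi Λ,
        volume {x : RN N | t < |u x|} * ENNReal.ofReal (r * t ^ (r - 1))) ≤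
      ENNReal.ofReal (K * δ ^ (2 * s / (N : ℝ)) * r * Λ ^ (r - 2 - σ) / (σ + 2 - r)) := by
    set D : ℝ := K * δ ^ (2 * s / (N : ℝ)) with hDdef
    have hDpos : 0 < D := by positivity
    have hmono : ∀ t ∈ Ioi Λ,
        volume {x : RN N | t < |u x|} * ENNReal.ofReal (r * t ^ (r - 1)) ≤
          ENNReal.ofReal (D * r * t ^ (r - 3 - σ)) := by
      intro t ht
      have ht0 : 0 < t := hΛ.trans ht
      calc volume {x : RN N | t < |u x|} * ENNReal.ofReal (r * t ^ (r - 1))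
          ≤ ENNReal.ofReal (D * t ^ (-(2 + σ))) * ENNReal.ofReal (r * t ^ (r - 1)) := by
            gcongr
            exact tail t (le_of_lt ht)
        _ = ENNReal.ofReal (D * t ^ (-(2 + σ)) * (r * t ^ (r - 1))) :=
            (ENNReal.ofReal_mul (by positivity)).symm
        _ = ENNReal.ofReal (D * r * t ^ (r - 3 - σ)) := by
            congr 1
            have hpow : t ^ (-(2 + σ)) * t ^ (r - 1) = t ^ (r - 3 - σ) := by
              rw [← Real.rpow_add ht0]
              congr 1
              ring
            calc D * t ^ (-(2 + σ)) * (r * t ^ (r - 1))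
                = D * r * (t ^ (-(2 + σ)) * t ^ (r - 1)) := by ring
              _ = D * r * t ^ (r - 3 - σ) := by rw [hpow]
    have hint : IntegrableOn (fun t : ℝ => D * r * t ^ (r - 3 - σ)) (Ioi Λ) volume :=
      (integrableOn_Ioi_rpow_of_lt (by linarith : r - 3 - σ < -1) hΛ).const_mul (D * r)
    calc (∫⁻ t in Ioi Λ,
          volume {x : RN N | t < |u x|} * ENNReal.ofReal (r * t ^ (r - 1)))
        ≤ ∫⁻ t in Ioi Λ, ENNReal.ofReal (D * r * t ^ (r - 3 - σ)) :=
          setLIntegral_mono' measurableSet_Ioi hmono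
      _ = ENNReal.ofReal (∫ t in Ioi Λ, D * r * t ^ (r - 3 - σ)) :=
          (ofReal_integral_eq_lintegral_ofReal hint
            (((ae_restrict_iff' measurableSet_Ioi).2 (Eventually.of_forall fun t ht => by
              have ht0 : (0 : ℝ) < t := hΛ.trans ht
              positivity)))).symm
      _ ≤ ENNReal.ofReal (D * r * Λ ^ (r - 2 - σ) / (σ + 2 - r)) := by
          apply ENNReal.ofReal_le_ofReal
          rw [MeasureTheory.integral_const_mul,
            integral_Ioi_rpow_of_lt (by linarith : r - 3 - σ < -1) hΛ]
          have h1 : r - 3 - σ + 1 = r - 2 - σ := by ring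
          rw [h1]
          have h2 : r - 2 - σ ≠ 0 := by
            intro h
            have : r = 2 + σ := by linarith
            linarith
          have h3 : σ + 2 - r ≠ 0 := by
            intro h
            have : r = 2 + σ := by linarith
            linarith
          apply le_of_eq
          field_simp
          ring
      _ = ENNReal.ofReal (K * δ ^ (2 * s / (N : ℝ)) * r * Λ ^ (r - 2 - σ) / (σ + 2 - r)) := by
          rw [hDdef]
  -- combine
  have hΛr2 : Λ ^ (r - 2) = c₀ ^ (r - 2) * δ ^ ((r - 2) / p) := by
    rw [hΛdef, Real.mul_rpow hc₀.le (rpow_pos_of_pos hδ _).le, ← Real.rpow_mul hδ.le]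
    congr 2
    field_simp
  have hΛr2σ : Λ ^ (r - 2 - σ) = c₀ ^ (r - 2 - σ) * δ ^ ((r - 2 - σ) / p) := by
    rw [hΛdef, Real.mul_rpow hc₀.le (rpow_pos_of_pos hδ _).le, ← Real.rpow_mul hδ.le]
    congr 2
    field_simp
  have hδcomb : δ ^ (2 * s / (N : ℝ)) * δ ^ ((r - 2 - σ) / p) = δ ^ ((r - 2) / p) := by
    rw [← Real.rpow_add hδ]
    congr 1
    rw [hσdef]
    field_simp
    ring
  calc (∫⁻ x : RN N, ENNReal.ofReal (|u x| ^ r))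
      = (∫⁻ t in Ioc (0 : ℝ) Λ,
          volume {x : RN N | t < |u x|} * ENNReal.ofReal (r * t ^ (r - 1))) +
        ∫⁻ t in Ioi Λ,
          volume {x : RN N | t < |u x|} * ENNReal.ofReal (r * t ^ (r - 1)) := by
        rw [hlc, hsplit]
    _ ≤ ENNReal.ofReal (M * r * Λ ^ (r - 2) / (r - 2)) +
        ENNReal.ofReal (K * δ ^ (2 * s / (N : ℝ)) * r * Λ ^ (r - 2 - σ) / (σ + 2 - r)) :=
        add_le_add hI1 hI2
    _ = ENNReal.ofReal (M * r * Λ ^ (r - 2) / (r - 2) +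
          K * δ ^ (2 * s / (N : ℝ)) * r * Λ ^ (r - 2 - σ) / (σ + 2 - r)) := by
        rw [← ENNReal.ofReal_add]
        · apply div_nonneg (by positivity) (by linarith)
        · apply div_nonneg (by positivity) (by linarith)
    _ ≤ ENNReal.ofReal (C * δ ^ ((r - 2) / p)) := by
        apply ENNReal.ofReal_le_ofReal
        apply le_of_eq
        calc M * r * Λ ^ (r - 2) / (r - 2) +
              K * δ ^ (2 * s / (N : ℝ)) * r * Λ ^ (r - 2 - σ) / (σ + 2 - r)
            = M * r * c₀ ^ (r - 2) / (r - 2) * δ ^ ((r - 2) / p) +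
              K * r * c₀ ^ (r - 2 - σ) / (σ + 2 - r) *
                (δ ^ (2 * s / (N : ℝ)) * δ ^ ((r - 2 - σ) / p)) := by
              rw [hΛr2, hΛr2σ]
              ring
          _ = C * δ ^ ((r - 2) / p) := by
              rw [hδcomb, hCdef]
              ring


lemma cheb_rpow {α : Type*} [MeasurableSpace α] (μ : Measure α) {v : α → ℝ}
    (hv : Measurable v) {lam q : ℝ} (hlam : 0 < lam) (hq : 0 < q) :
    ENNReal.ofReal (lam ^ q) * μ {y | lam < |v y|} ≤
      ∫⁻ y, ENNReal.ofReal (|v y| ^ q) ∂μ := by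
  have hsub : {y | lam < |v y|} ⊆
      {y | ENNReal.ofReal (lam ^ q) ≤ ENNReal.ofReal (|v y| ^ q)} := fun y hy =>
    ENNReal.ofReal_le_ofReal (Real.rpow_le_rpow hlam.le (le_of_lt hy) hq.le)
  calc ENNReal.ofReal (lam ^ q) * μ {y | lam < |v y|}
      ≤ ENNReal.ofReal (lam ^ q) *
          μ {y | ENNReal.ofReal (lam ^ q) ≤ ENNReal.ofReal (|v y| ^ q)} :=
        mul_le_mul_right (measure_mono hsub) _
    _ ≤ ∫⁻ y, ENNReal.ofReal (|v y| ^ q) ∂μ :=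
        mul_meas_ge_le_lintegral₀
          ((hv.abs.pow measurable_const).ennreal_ofReal.aemeasurable) _

lemma van_all (hs : 0 < s) (hNs : 2 * s < (N : ℝ)) (v : ℕ → RN N → ℝ)
    (hv : ∀ n, Measurable (v n)) {M : ℝ} (hM : 0 < M)
    (hΓ : ∀ n, gagl N s (v n) ≤ ENNReal.ofReal M)
    (h2 : ∀ n, (∫⁻ x : RN N, ENNReal.ofReal (v n x ^ 2)) ≤ ENNReal.ofReal M)
    (m : ℕ → ℝ) (hm : Tendsto m atTop (nhds 0))
    (hloc : ∀ n (x : RN N),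
      (∫⁻ y in closedBall x 1, ENNReal.ofReal (v n y ^ 2)) ≤ ENNReal.ofReal (m n)) :
    ∀ r : ℝ, 2 < r → r < 2 * N / (N - 2 * s) →
      Tendsto (fun n => ∫⁻ x : RN N, ENNReal.ofReal (|v n x| ^ r)) atTop (nhds 0) := by
  have hN0 : (0 : ℝ) < N := lt_trans (by positivity) hNs
  -- the step lemma
  have step : ∀ p : ℝ, 0 < p →
      (∀ δ : ℝ, 0 < δ → ∀ᶠ n in atTop, ∀ (x : RN N) (ρ lam : ℝ), 0 < ρ → ρ ≤ 1 → 0 < lam →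
        volume {y ∈ closedBall x ρ | lam / 2 < |v n y|} ≤
          ENNReal.ofReal ((2 / lam) ^ p * δ)) →
      ∀ r : ℝ, 2 < r → r < 2 + 2 * s * p / (N : ℝ) →
        Tendsto (fun n => ∫⁻ x : RN N, ENNReal.ofReal (|v n x| ^ r)) atTop (nhds 0) := by
    intro p hp hsmall r hr2 hrp
    obtain ⟨C, hC, hmas⟩ := master hs hNs hp hr2 hrp hM
    rw [ENNReal.tendsto_nhds_zero]
    intro ε hε
    set e : ℝ := (min 1 ε).toReal with hedef
    have hmin : min 1 ε ≠ ⊤ :=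
      ne_top_of_le_ne_top ENNReal.one_ne_top (min_le_left _ _)
    have he : 0 < e :=
      ENNReal.toReal_pos (lt_min zero_lt_one hε).ne' hmin
    have hee : ENNReal.ofReal e ≤ ε := by
      rw [hedef, ENNReal.ofReal_toReal hmin]
      exact min_le_right _ _
    set δ : ℝ := (e / C) ^ (p / (r - 2)) with hδdef
    have hδ : 0 < δ := rpow_pos_of_pos (by positivity) _
    have hCδ : C * δ ^ ((r - 2) / p) = e := by
      have hne1 : r - 2 ≠ 0 := by linarith
      rw [hδdef, ← Real.rpow_mul (by positivity)]
      have hexp : p / (r - 2) * ((r - 2) / p) = 1 := by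
        field_simp
      rw [hexp, Real.rpow_one, mul_div_cancel₀ _ hC.ne']
    filter_upwards [hsmall δ hδ] with n hn
    calc (∫⁻ x : RN N, ENNReal.ofReal (|v n x| ^ r))
        ≤ ENNReal.ofReal (C * δ ^ ((r - 2) / p)) :=
          hmas (v n) δ (hv n) hδ (hΓ n) (h2 n) hn
      _ = ENNReal.ofReal e := by rw [hCδ]
      _ ≤ ε := hee
  -- base smallness from local masses
  have hsmall_base : ∀ δ : ℝ, 0 < δ → ∀ᶠ n in atTop, ∀ (x : RN N) (ρ lam : ℝ),
      0 < ρ → ρ ≤ 1 → 0 < lam →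
      volume {y ∈ closedBall x ρ | lam / 2 < |v n y|} ≤
        ENNReal.ofReal ((2 / lam) ^ (2 : ℝ) * δ) := by
    intro δ hδ
    have : ∀ᶠ n in atTop, m n < δ := by
      have := hm.eventually (eventually_lt_nhds hδ)
      simpa using this
    filter_upwards [this] with n hn x ρ lam hρ hρ1 hlam
    set T := {y ∈ closedBall x ρ | lam / 2 < |v n y|} with hT
    have hTmeas : MeasurableSet T :=
      measurableSet_closedBall.inter ((hv n).abs measurableSet_Ioi)
    have hpt : ∀ y ∈ T, ENNReal.ofReal ((lam / 2) ^ 2) ≤ ENNReal.ofReal (v n y ^ 2) := by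
      intro y hy
      apply ENNReal.ofReal_le_ofReal
      have h1 : (lam / 2) ^ 2 ≤ |v n y| ^ 2 := pow_le_pow_left₀ (by positivity) hy.2.le 2
      rwa [sq_abs] at h1
    have hchain : ENNReal.ofReal ((lam / 2) ^ 2) * volume T ≤ ENNReal.ofReal δ := by
      calc ENNReal.ofReal ((lam / 2) ^ 2) * volume T
          = ∫⁻ _ in T, ENNReal.ofReal ((lam / 2) ^ 2) := by rw [setLIntegral_const, mul_comm]
        _ ≤ ∫⁻ y in T, ENNReal.ofReal (v n y ^ 2) := setLIntegral_mono' hTmeas hpt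
        _ ≤ ∫⁻ y in closedBall x 1, ENNReal.ofReal (v n y ^ 2) := by
            apply lintegral_mono_set
            refine fun y hy => ?_
            exact (closedBall_subset_closedBall hρ1) hy.1
        _ ≤ ENNReal.ofReal (m n) := hloc n x
        _ ≤ ENNReal.ofReal δ := ENNReal.ofReal_le_ofReal hn.le
    have hl2 : (0:ℝ) < (lam / 2) ^ 2 := by positivity
    have hdiv : volume {y ∈ closedBall x ρ | lam / 2 < |v n y|} ≤
        ENNReal.ofReal δ / ENNReal.ofReal ((lam / 2) ^ 2) := by
      rw [ENNReal.le_div_iff_mul_le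
        (Or.inl (ENNReal.ofReal_pos.mpr hl2).ne')
        (Or.inl ENNReal.ofReal_ne_top), mul_comm]
      exact hchain
    refine hdiv.trans (le_of_eq ?_)
    rw [← ENNReal.ofReal_div_of_pos hl2]
    congr 1
    rw [show ((2:ℝ) / lam) ^ (2:ℝ) = ((2:ℝ) / lam) ^ (2:ℕ) from Real.rpow_natCast _ 2]
    field_simp
  -- smallness from a vanishing L^p norm
  have hsmall_iter : ∀ p : ℝ, 0 < p →
      Tendsto (fun n => ∫⁻ x : RN N, ENNReal.ofReal (|v n x| ^ p)) atTop (nhds 0) →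
      ∀ δ : ℝ, 0 < δ → ∀ᶠ n in atTop, ∀ (x : RN N) (ρ lam : ℝ),
        0 < ρ → ρ ≤ 1 → 0 < lam →
        volume {y ∈ closedBall x ρ | lam / 2 < |v n y|} ≤
          ENNReal.ofReal ((2 / lam) ^ p * δ) := by
    intro p hp hvan δ hδ
    have hev : ∀ᶠ n in atTop,
        (∫⁻ x : RN N, ENNReal.ofReal (|v n x| ^ p)) ≤ ENNReal.ofReal δ := by
      rw [ENNReal.tendsto_nhds_zero] at hvan
      exact hvan (ENNReal.ofReal δ) (by simp [ENNReal.ofReal_pos, hδ])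
    filter_upwards [hev] with n hn x ρ lam hρ hρ1 hlam
    have hsub : {y ∈ closedBall x ρ | lam / 2 < |v n y|} ⊆ {y : RN N | lam / 2 < |v n y|} :=
      fun y hy => hy.2
    have hcb := cheb_rpow (volume : Measure (RN N)) (hv n)
      (by positivity : (0:ℝ) < lam / 2) hp
    have hl2 : (0:ℝ) < (lam / 2) ^ p := rpow_pos_of_pos (by positivity) _
    have hchain : ENNReal.ofReal ((lam / 2) ^ p) *
        volume {y ∈ closedBall x ρ | lam / 2 < |v n y|} ≤ ENNReal.ofReal δ :=
      (mul_le_mul_right (measure_mono hsub) _).trans (hcb.trans hn)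
    have hdiv : volume {y ∈ closedBall x ρ | lam / 2 < |v n y|} ≤
        ENNReal.ofReal δ / ENNReal.ofReal ((lam / 2) ^ p) := by
      rw [ENNReal.le_div_iff_mul_le
        (Or.inl (ENNReal.ofReal_pos.mpr hl2).ne')
        (Or.inl ENNReal.ofReal_ne_top), mul_comm]
      exact hchain
    refine hdiv.trans (le_of_eq ?_)
    rw [← ENNReal.ofReal_div_of_pos hl2]
    congr 1
    rw [div_eq_mul_inv δ, mul_comm δ, ← Real.inv_rpow (by positivity), inv_div]
  -- the iteration exponents
  set q : ℕ → ℝ := fun k => Nat.rec 2 (fun _ qk => 2 + 2 * s * qk / (N : ℝ)) k with hqdef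
  have hq0 : q 0 = 2 := rfl
  have hqsucc : ∀ k, q (k + 1) = 2 + 2 * s * q k / (N : ℝ) := fun k => rfl
  have hq2 : ∀ k, 2 ≤ q k := by
    intro k
    induction k with
    | zero => simp [hq0]
    | succ k ih =>
      rw [hqsucc]
      have : 0 < 2 * s * q k / (N : ℝ) := by positivity
      linarith
  have claim : ∀ k : ℕ, ∀ r : ℝ, 2 < r → r < 2 + 2 * s * q k / (N : ℝ) →
      Tendsto (fun n => ∫⁻ x : RN N, ENNReal.ofReal (|v n x| ^ r)) atTop (nhds 0) := by
    intro k
    induction k with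
    | zero =>
      intro r hr2 hrk
      refine step 2 (by norm_num) hsmall_base r hr2 ?_
      rw [hq0] at hrk
      exact hrk
    | succ k ih =>
      intro r hr2 hrk
      by_cases hcase : r < 2 + 2 * s * q k / (N : ℝ)
      · exact ih r hr2 hcase
      · have hqk0 : (0:ℝ) < q k := lt_of_lt_of_le two_pos (hq2 k)
        have hq1pos : 2 < q (k + 1) := by
          rw [hqsucc]
          have : (0:ℝ) < 2 * s * q k / (N : ℝ) :=
            div_pos (mul_pos (by positivity) hqk0) hN0
          linarith
        set p₀ : ℝ := (N : ℝ) * (r - 2) / (2 * s) with hp₀def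
        have h1 : r - 2 < 2 * s * q (k + 1) / (N : ℝ) := by
          rw [hqsucc] at hrk ⊢
          linarith
        have h2 : (r - 2) * (N : ℝ) < 2 * s * q (k + 1) := (lt_div_iff₀ hN0).mp h1
        have hp₀lt : p₀ < q (k + 1) := by
          rw [hp₀def, div_lt_iff₀ (by positivity : (0:ℝ) < 2 * s)]
          nlinarith
        set pm : ℝ := max 2 p₀ with hpmdef
        have hpm2 : (2:ℝ) ≤ pm := le_max_left _ _
        have hpp₀ : p₀ ≤ pm := le_max_right _ _
        have hpmlt : pm < q (k + 1) := max_lt hq1pos hp₀lt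
        obtain ⟨p, hpgt, hplt⟩ := exists_between hpmlt
        have hp2 : 2 < p := lt_of_le_of_lt hpm2 hpgt
        have hvanp : Tendsto (fun n => ∫⁻ x : RN N, ENNReal.ofReal (|v n x| ^ p))
            atTop (nhds 0) := by
          apply ih p hp2
          rw [← hqsucc]
          exact hplt
        refine step p (by linarith) (hsmall_iter p (by linarith) hvanp) r hr2 ?_
        have h3 : p₀ < p := lt_of_le_of_lt hpp₀ hpgt
        rw [hp₀def, div_lt_iff₀ (by positivity : (0:ℝ) < 2 * s)] at h3
        have h4 : r - 2 < 2 * s * p / (N : ℝ) := by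
          rw [lt_div_iff₀ hN0]
          nlinarith
        linarith
  -- conclude via the explicit formula for q
  have hqform : ∀ k : ℕ, q k = 2 * N / (N - 2 * s) -
      (2 * N / (N - 2 * s) - 2) * (2 * s / N) ^ k := by
    have hden : (N : ℝ) - 2 * s ≠ 0 := by linarith
    intro k
    induction k with
    | zero => rw [hq0, pow_zero, mul_one]; ring
    | succ k ih =>
      rw [hqsucc, ih, pow_succ]
      field_simp
      ring
  intro r hr2 hrT
  set T : ℝ := 2 * N / (N - 2 * s) with hTdef
  have hT2 : 2 < T := lt_trans hr2 hrT
  set c : ℝ := 2 * s / N with hcdef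
  have hc0 : 0 ≤ c := by positivity
  have hc1 : c < 1 := by
    rw [hcdef, div_lt_one hN0]
    exact hNs
  have htend : Tendsto (fun k : ℕ => (T - 2) * c ^ k) atTop (nhds 0) := by
    have := tendsto_pow_atTop_nhds_zero_of_lt_one hc0 hc1
    simpa using this.const_mul (T - 2)
  obtain ⟨k, hk⟩ := (htend.eventually (eventually_lt_nhds (by linarith : (0:ℝ) < T - r))).exists
  have hck : (T - 2) * c ^ (k + 1) ≤ (T - 2) * c ^ k := by
    apply mul_le_mul_of_nonneg_left _ (by linarith)
    exact pow_le_pow_of_le_one hc0 hc1.le (Nat.le_succ k)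
  have hrq : r < q (k + 1) := by
    rw [hqform (k + 1)]
    linarith
  apply claim k r hr2
  rw [← hqsucc]
  exact hrq


end lionsAux

/-- Lions' vanishing lemma in `H^s(ℝ^N)`. -/
theorem lions_lemma (N : ℕ) (s : ℝ) (hs : s ∈ Set.Ioo (0 : ℝ) 1)
    (hN : 2 * s < (N : ℝ)) (un : ℕ → RN N → ℝ) (hmem : ∀ n, memHs N s (un n))
    (hbdd : ∃ M : ℝ, ∀ n, Eform N s (un n) (un n) + (∫ x : RN N, un n x ^ 2) ≤ M)
    (hvan : Filter.Tendsto (fun n =>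
        sSup { r | ∃ z : RN N, r = ∫ x in Metric.closedBall z 1, un n x ^ 2 })
      Filter.atTop (nhds 0)) :
    ∀ r ∈ Set.Ioo (2 : ℝ) (twoStar N s),
      Filter.Tendsto (fun n => LpN N r (un n)) Filter.atTop (nhds 0) := by
  intro r hr
  obtain ⟨hr2, hrT⟩ := hr
  obtain ⟨M, hbddM⟩ := hbdd
  have hs0 : 0 < s := hs.1
  -- measurable representatives
  set v : ℕ → RN N → ℝ := fun n => ((hmem n).1.aestronglyMeasurable).mk (un n) with hvdef
  have hvmeas : ∀ n, Measurable (v n) := fun n =>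
    ((hmem n).1.aestronglyMeasurable).stronglyMeasurable_mk.measurable
  have hvae : ∀ n, un n =ᵐ[(volume : Measure (RN N))] v n := fun n =>
    ((hmem n).1.aestronglyMeasurable).ae_eq_mk
  have hsq : ∀ n, Integrable (fun x : RN N => un n x ^ 2) volume := fun n =>
    (hmem n).1.integrable_sq
  have hEform : ∀ n, Eform N s (un n) (un n) = (gagl N s (un n)).toReal := by
    intro n
    rw [Eform_self_congr_ae (hvae n),
      Eform_self_eq_toReal_gagl (hvmeas n) (by rw [← gagl_congr_ae (hvae n)]; exact (hmem n).2),
      gagl_congr_ae (hvae n)]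
  have hInt2 : ∀ n, 0 ≤ ∫ x : RN N, un n x ^ 2 := fun n =>
    integral_nonneg fun x => sq_nonneg _
  set M' : ℝ := max M 1 with hM'def
  have hM' : (0 : ℝ) < M' := lt_of_lt_of_le one_pos (le_max_right _ _)
  have hEnn : ∀ n, 0 ≤ Eform N s (un n) (un n) := fun n =>
    (hEform n) ▸ ENNReal.toReal_nonneg
  have hgagl_le : ∀ n, gagl N s (v n) ≤ ENNReal.ofReal M' := by
    intro n
    rw [← gagl_congr_ae (hvae n)]
    have hfin : gagl N s (un n) ≠ ⊤ := (hmem n).2.ne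
    rw [← ENNReal.ofReal_toReal hfin]
    apply ENNReal.ofReal_le_ofReal
    have h1 := hbddM n
    have h2 := hInt2 n
    have h3 := hEform n
    have h4 : M ≤ M' := le_max_left _ _
    linarith
  have h2_le : ∀ n, (∫⁻ x : RN N, ENNReal.ofReal (v n x ^ 2)) ≤ ENNReal.ofReal M' := by
    intro n
    have hcong : (∫⁻ x : RN N, ENNReal.ofReal (v n x ^ 2)) =
        ∫⁻ x : RN N, ENNReal.ofReal (un n x ^ 2) := by
      refine lintegral_congr_ae ?_
      filter_upwards [hvae n] with x hx
      rw [hx]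
    rw [hcong, ← ofReal_integral_eq_lintegral_ofReal (hsq n)
      (Eventually.of_forall fun x => sq_nonneg _)]
    apply ENNReal.ofReal_le_ofReal
    have h1 := hbddM n
    have h4 : M ≤ M' := le_max_left _ _
    linarith [hEnn n]
  -- local masses
  set m : ℕ → ℝ := fun n =>
    sSup { t | ∃ z : RN N, t = ∫ x in Metric.closedBall z 1, un n x ^ 2 } with hmdef
  have hbddS : ∀ n, BddAbove { t | ∃ z : RN N, t = ∫ x in Metric.closedBall z 1, un n x ^ 2 } := by
    intro n
    refine ⟨∫ x : RN N, un n x ^ 2, ?_⟩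
    rintro t ⟨z, rfl⟩
    exact setIntegral_le_integral (hsq n) (Eventually.of_forall fun x => sq_nonneg _)
  have hloc : ∀ n (x : RN N),
      (∫⁻ y in closedBall x 1, ENNReal.ofReal (v n y ^ 2)) ≤ ENNReal.ofReal (m n) := by
    intro n x
    have hcong : (∫⁻ y in closedBall x 1, ENNReal.ofReal (v n y ^ 2)) =
        ∫⁻ y in closedBall x 1, ENNReal.ofReal (un n y ^ 2) := by
      refine lintegral_congr_ae (ae_restrict_of_ae ?_)
      filter_upwards [hvae n] with y hy
      rw [hy]
    rw [hcong, ← ofReal_integral_eq_lintegral_ofReal ((hsq n).integrableOn)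
      (Eventually.of_forall fun y => sq_nonneg _)]
    apply ENNReal.ofReal_le_ofReal
    exact le_csSup (hbddS n) ⟨x, rfl⟩
  -- apply the vanishing lemma
  have hvan_r := van_all hs0 hN v hvmeas hM' hgagl_le h2_le m hvan hloc r hr2
    (by simpa [twoStar] using hrT)
  -- convert to LpN
  have hr0 : (0 : ℝ) < r := by linarith
  have hLp : ∀ n, LpN N r (un n) = ((∫⁻ x : RN N,
      ENNReal.ofReal (|v n x| ^ r)).toReal) ^ (1 / r) := by
    intro n
    unfold LpN
    congr 1
    rw [integral_congr_ae (show (fun x : RN N => |un n x| ^ r) =ᵐ[volume]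
        fun x => |v n x| ^ r by
      filter_upwards [hvae n] with x hx
      rw [hx])]
    exact integral_eq_lintegral_of_nonneg_ae
      (Eventually.of_forall fun x => Real.rpow_nonneg (abs_nonneg _) r)
      ((hvmeas n).abs.pow measurable_const).aestronglyMeasurable
  have htoReal : Tendsto (fun n => (∫⁻ x : RN N,
      ENNReal.ofReal (|v n x| ^ r)).toReal) atTop (nhds 0) := by
    have := (ENNReal.tendsto_toReal (show (0 : ℝ≥0∞) ≠ ⊤ by simp)).comp hvan_r
    simpa [Function.comp_def] using this
  have hcont := Real.continuousAt_rpow_const 0 (1 / r)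
    (Or.inr (le_of_lt (one_div_pos.mpr hr0)))
  have hfinal := hcont.tendsto.comp htoReal
  rw [Real.zero_rpow (one_div_ne_zero hr0.ne')] at hfinal
  have hfun : (fun n => LpN N r (un n)) = fun n =>
      ((∫⁻ x : RN N, ENNReal.ofReal (|v n x| ^ r)).toReal) ^ (1 / r) := funext hLp
  rw [hfun]
  simpa [Function.comp_def] using hfinal
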